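/- Let 1 ≤ μ ≤ 2 and Y = {x ∈ ℝ² : |x₁| = |x₂|^μ}, and let Z = {z ∈ ℂ² : z₁² + z₂⁴ = 0}. Then there is a constant c > 0 such that dist(x, Z) ≥ c · dist(x, Y)^{2/μ} for all real x in a neighborhood of 0, and the exponent 2/μ is optimal (there is a sequence of real points x → 0 with dist(x, Z) ≤ C · dist(x, Y)^{2/μ}). -/

import Mathlib

open Metric Filter

-- helpers
private lemma le_infDist' {α : Type*} [PseudoMetricSpace α] {s : Set α} {x : α} {b : ℝ}
    (hs : s.Nonempty) (h : ∀ y ∈ s, b ≤ dist x y) : b ≤ Metric.infDist x s := by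
  by_contra hlt
  push_neg at hlt
  obtain ⟨y, hy, hd⟩ := (Metric.infDist_lt_iff hs).mp hlt
  linarith [h y hy]

private lemma coord_dist_le {𝕜 : Type*} [RCLike 𝕜] {n : ℕ}
    (x y : EuclideanSpace 𝕜 (Fin n)) (i : Fin n) : dist (x i) (y i) ≤ dist x y := by
  rw [EuclideanSpace.dist_eq]
  have h : dist (x i) (y i) ^ 2 ≤ ∑ j, dist (x j) (y j) ^ 2 :=
    Finset.single_le_sum (f := fun j => dist (x j) (y j) ^ 2)
      (fun j _ => sq_nonneg _) (Finset.mem_univ i)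
  calc dist (x i) (y i) = Real.sqrt (dist (x i) (y i) ^ 2) := (Real.sqrt_sq dist_nonneg).symm
    _ ≤ _ := Real.sqrt_le_sqrt h

-- from z0^2 + w^4 = 0 and |a - z0| ≤ δ (a real), extract real info
private lemma key2 (a : ℝ) (z0 w : ℂ) (δ : ℝ) (hz : z0 ^ 2 + w ^ 4 = 0)
    (hd : ‖(a : ℂ) - z0‖ ≤ δ) :
    |a| ≤ δ + 2 * |w.re| * |w.im| ∧ |w.re ^ 2 - w.im ^ 2| ≤ δ := by
  have hre : |a - z0.re| ≤ δ := by
    have := Complex.abs_re_le_norm ((a : ℂ) - z0)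
    simpa using this.trans hd
  have him : |z0.im| ≤ δ := by
    have := Complex.abs_im_le_norm ((a : ℂ) - z0)
    simp only [Complex.sub_im, Complex.ofReal_im, zero_sub, abs_neg] at this
    exact this.trans hd
  have hfac : (z0 - Complex.I * w ^ 2) * (z0 + Complex.I * w ^ 2) = 0 := by
    linear_combination hz - w ^ 4 * Complex.I_sq
  have hcase : z0 = Complex.I * w ^ 2 ∨ z0 = -(Complex.I * w ^ 2) := by
    rcases mul_eq_zero.mp hfac with h | h
    · exact Or.inl (by linear_combination h)
    · exact Or.inr (by linear_combination h)
  have hre2 : (Complex.I * w ^ 2).re = -(2 * w.re * w.im) := by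
    simp [Complex.mul_re, pow_two]; ring
  have him2 : (Complex.I * w ^ 2).im = w.re ^ 2 - w.im ^ 2 := by
    simp [Complex.mul_im, pow_two]; try ring
  have hreq : |z0.re| = 2 * |w.re| * |w.im| := by
    have h2 : |(-(2 * w.re * w.im))| = 2 * |w.re| * |w.im| := by
      rw [abs_neg, abs_mul, abs_mul, abs_two]
    rcases hcase with h | h <;> rw [h]
    · rw [hre2]; exact h2
    · rw [Complex.neg_re, hre2, neg_neg, abs_mul, abs_mul, abs_two]
  have himq : |z0.im| = |w.re ^ 2 - w.im ^ 2| := by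
    rcases hcase with h | h <;> rw [h]
    · rw [him2]
    · rw [Complex.neg_im, him2, abs_neg]
  constructor
  · have h5 : |a| ≤ |a - z0.re| + |z0.re| := by
      calc |a| = |(a - z0.re) + z0.re| := by ring_nf
        _ ≤ _ := abs_add_le _ _
    rw [hreq] at h5
    linarith
  · rw [← himq]; exact him

-- the main real arithmetic
private lemma key3 (μ a b u v δ : ℝ) (hμ1 : 1 ≤ μ) (hμ2 : μ ≤ 2)
    (hδ0 : 0 ≤ δ) (hδ1 : δ ≤ 1)
    (h1 : |b - u| ≤ δ) (h2 : |v| ≤ δ) (h3 : |u ^ 2 - v ^ 2| ≤ δ)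
    (h4 : |a| ≤ δ + 2 * |u| * |v|) :
    |a| + |b| ^ μ ≤ 11 * δ ^ (μ / 2) := by
  have hμ0 : (0:ℝ) < μ := lt_of_lt_of_le one_pos hμ1
  have hu2 : u ^ 2 ≤ 2 * δ := by
    have : u ^ 2 - v ^ 2 ≤ δ := (abs_le.mp h3).2
    nlinarith [abs_le.mp h2, sq_abs v]
  have hb2 : b ^ 2 ≤ 6 * δ := by
    have hbu : (b - u) ^ 2 ≤ δ ^ 2 := by
      have := pow_le_pow_left₀ (abs_nonneg (b - u)) h1 2
      rwa [sq_abs] at this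
    nlinarith [sq_nonneg (b - 2 * u), mul_nonneg hδ0 (by linarith : (0:ℝ) ≤ 1 - δ)]
  have hu : |u| ≤ 2 := by
    nlinarith [sq_abs u, abs_nonneg u]
  have ha : |a| ≤ 5 * δ := by
    nlinarith [abs_le.mp h2, abs_nonneg u, abs_nonneg v]
  have hδμ : δ ≤ δ ^ (μ / 2) := by
    rcases eq_or_lt_of_le hδ0 with h | h
    · simp [← h, Real.zero_rpow (by positivity : μ / 2 ≠ 0)]
    · calc δ = δ ^ (1:ℝ) := (Real.rpow_one δ).symm
        _ ≤ δ ^ (μ / 2) := Real.rpow_le_rpow_of_exponent_ge h hδ1 (by linarith)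
  have hbμ : |b| ^ μ ≤ 6 * δ ^ (μ / 2) := by
    have hb2' : |b| ^ μ = (b ^ 2) ^ (μ / 2) := by
      rw [← sq_abs, ← Real.rpow_natCast |b| 2, ← Real.rpow_mul (abs_nonneg b)]
      rw [show ((2:ℕ):ℝ) * (μ / 2) = μ by push_cast; ring]
    rw [hb2']
    calc (b ^ 2) ^ (μ / 2) ≤ (6 * δ) ^ (μ / 2) :=
          Real.rpow_le_rpow (sq_nonneg b) hb2 (by positivity)
      _ = 6 ^ (μ / 2) * δ ^ (μ / 2) := Real.mul_rpow (by norm_num) hδ0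
      _ ≤ 6 ^ (1:ℝ) * δ ^ (μ / 2) := by
          have h6 : (6:ℝ) ^ (μ / 2) ≤ 6 ^ (1:ℝ) :=
            Real.rpow_le_rpow_of_exponent_le (by norm_num) (by linarith)
          have := Real.rpow_nonneg hδ0 (μ / 2)
          nlinarith
      _ = 6 * δ ^ (μ / 2) := by norm_num
  calc |a| + |b| ^ μ ≤ 5 * δ + 6 * δ ^ (μ / 2) := by linarith
    _ ≤ 11 * δ ^ (μ / 2) := by linarith

/-- For `1 ≤ μ ≤ 2`, `Y = {x ∈ ℝ² | |x₁| = |x₂|^μ}` and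
`Z = {z ∈ ℂ² | z₁² + z₂⁴ = 0}`, one has `dist(x,Z) ≥ c · dist(x,Y)^(2/μ)` for real `x`
near `0`, and the exponent `2/μ` is optimal: some sequence of nonzero real points
tending to `0` satisfies `dist(x,Z) ≤ C · dist(x,Y)^(2/μ)`. -/
theorem stmt_14 (μ : ℝ) (hμ1 : 1 ≤ μ) (hμ2 : μ ≤ 2)
    (Y : Set (EuclideanSpace ℝ (Fin 2)))
    (hY : Y = {x : EuclideanSpace ℝ (Fin 2) | |x 0| = |x 1| ^ μ})
    (Z : Set (EuclideanSpace ℂ (Fin 2)))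
    (hZ : Z = {z : EuclideanSpace ℂ (Fin 2) | z 0 ^ 2 + z 1 ^ 4 = 0})
    (emb : EuclideanSpace ℝ (Fin 2) → EuclideanSpace ℂ (Fin 2))
    (hemb : ∀ x i, emb x i = (x i : ℂ)) :
    (∃ c : ℝ, 0 < c ∧ ∀ᶠ x in nhds (0 : EuclideanSpace ℝ (Fin 2)),
        c * infDist x Y ^ (2 / μ) ≤ infDist (emb x) Z) ∧
    (∃ C : ℝ, 0 < C ∧ ∃ x : ℕ → EuclideanSpace ℝ (Fin 2),
        Tendsto x atTop (nhds (0 : EuclideanSpace ℝ (Fin 2))) ∧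
        ∀ k, x k ≠ 0 ∧ infDist (emb (x k)) Z ≤ C * infDist (x k) Y ^ (2 / μ)) := by
  have hμ0 : (0:ℝ) < μ := lt_of_lt_of_le one_pos hμ1
  have h2μ0 : (0:ℝ) < 2 / μ := by positivity
  have h2μ2 : 2 / μ ≤ 2 := by
    rw [div_le_iff₀ hμ0]; linarith
  have hY0 : (0 : EuclideanSpace ℝ (Fin 2)) ∈ Y := by
    rw [hY]
    simp [Real.zero_rpow (ne_of_gt hμ0)]
  have hZ0 : (0 : EuclideanSpace ℂ (Fin 2)) ∈ Z := by
    rw [hZ]; simp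
  have hZne : Z.Nonempty := ⟨0, hZ0⟩
  have hYne : Y.Nonempty := ⟨0, hY0⟩
  constructor
  · refine ⟨1/121, by norm_num, ?_⟩
    filter_upwards [Metric.closedBall_mem_nhds (0 : EuclideanSpace ℝ (Fin 2)) one_pos] with x hx
    set a := x 0 with ha
    set b := x 1 with hb
    set d := infDist x Y with hd
    have hd0 : 0 ≤ d := infDist_nonneg
    have hdle : d ≤ 1 := by
      calc d ≤ dist x 0 := infDist_le_dist_of_mem hY0
        _ ≤ 1 := by simpa [Metric.mem_closedBall] using hx
    have hL1 : d ^ (2/μ) ≤ 1 := Real.rpow_le_one hd0 hdle (le_of_lt h2μ0)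
    -- d ≤ |a| + |b|^μ
    have hdY : d ≤ |a| + |b| ^ μ := by
      set y : EuclideanSpace ℝ (Fin 2) := (WithLp.equiv 2 (Fin 2 → ℝ)).symm ![|b| ^ μ, b] with hy
      have hy0 : y 0 = |b| ^ μ := rfl
      have hy1 : y 1 = b := rfl
      have hyY : y ∈ Y := by
        rw [hY]
        simp only [Set.mem_setOf_eq, hy0, hy1]
        rw [abs_of_nonneg (Real.rpow_nonneg (abs_nonneg b) μ)]
      have hdist : dist x y = |a - |b| ^ μ| := by
        rw [EuclideanSpace.dist_eq, Fin.sum_univ_two, hy0, hy1, ← ha, ← hb]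
        simp [Real.dist_eq, Real.sqrt_sq_eq_abs]
      calc d ≤ dist x y := infDist_le_dist_of_mem hyY
        _ = |a - |b| ^ μ| := hdist
        _ ≤ |a| + |b| ^ μ := by
            have h5 := abs_sub a (|b| ^ μ)
            rwa [abs_of_nonneg (Real.rpow_nonneg (abs_nonneg b) μ)] at h5
    refine le_infDist' hZne ?_
    intro z hzZ
    set δ := dist (emb x) z with hδ
    have hδ0 : 0 ≤ δ := dist_nonneg
    by_cases hδ1 : 1 ≤ δ
    · calc 1/121 * d ^ (2/μ) ≤ 1/121 * 1 := by nlinarith [Real.rpow_nonneg hd0 (2/μ)]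
        _ ≤ δ := by linarith
    · push_neg at hδ1
      have hδ1 : δ ≤ 1 := le_of_lt hδ1
      have hzeq : z 0 ^ 2 + z 1 ^ 4 = 0 := by rw [hZ] at hzZ; exact hzZ
      have h0 : ‖(a : ℂ) - z 0‖ ≤ δ := by
        have := coord_dist_le (emb x) z 0
        rw [hemb x 0, Complex.dist_eq] at this
        exact this
      have h1c : ‖(b : ℂ) - z 1‖ ≤ δ := by
        have := coord_dist_le (emb x) z 1
        rw [hemb x 1, Complex.dist_eq] at this
        exact this
      obtain ⟨ha4, h3⟩ := key2 a (z 0) (z 1) δ hzeq h0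
      have h1 : |b - (z 1).re| ≤ δ := by
        have := Complex.abs_re_le_norm ((b : ℂ) - z 1)
        simpa using this.trans h1c
      have h2 : |(z 1).im| ≤ δ := by
        have := Complex.abs_im_le_norm ((b : ℂ) - z 1)
        simp only [Complex.sub_im, Complex.ofReal_im, zero_sub, abs_neg] at this
        exact this.trans h1c
      have hkey := key3 μ a b (z 1).re (z 1).im δ hμ1 hμ2 hδ0 hδ1 h1 h2 h3 ha4
      have hd11 : d ≤ 11 * δ ^ (μ / 2) := le_trans hdY hkey
      have hpow : d ^ (2/μ) ≤ 121 * δ := by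
        calc d ^ (2/μ) ≤ (11 * δ ^ (μ / 2)) ^ (2/μ) :=
              Real.rpow_le_rpow hd0 hd11 (le_of_lt h2μ0)
          _ = 11 ^ (2/μ) * (δ ^ (μ/2)) ^ (2/μ) :=
              Real.mul_rpow (by norm_num) (Real.rpow_nonneg hδ0 _)
          _ = 11 ^ (2/μ) * δ := by
              rw [← Real.rpow_mul hδ0]
              congr 1
              rw [div_mul_div_comm]
              rw [show μ * 2 / (2 * μ) = 1 by field_simp, Real.rpow_one]
          _ ≤ 121 * δ := by
              have h11 : (11:ℝ) ^ (2/μ) ≤ 11 ^ (2:ℝ) :=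
                Real.rpow_le_rpow_of_exponent_le (by norm_num) h2μ2
              have : (11:ℝ) ^ (2:ℝ) = 121 := by
                rw [show (2:ℝ) = ((2:ℕ):ℝ) by norm_num, Real.rpow_natCast]; norm_num
              nlinarith [Real.rpow_nonneg (show (0:ℝ) ≤ 11 by norm_num) (2/μ)]
      linarith
  · refine ⟨16, by norm_num, fun k => (WithLp.equiv 2 (Fin 2 → ℝ)).symm ![0, 1/(k+1)], ?_, ?_⟩
    · rw [tendsto_iff_dist_tendsto_zero]
      have hdd : ∀ k : ℕ, dist ((WithLp.equiv 2 (Fin 2 → ℝ)).symm ![0, 1/(k+1:ℝ)])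
          (0 : EuclideanSpace ℝ (Fin 2)) = 1/(k+1:ℝ) := by
        intro k
        rw [EuclideanSpace.dist_eq, Fin.sum_univ_two]
        have : (0 : EuclideanSpace ℝ (Fin 2)) 0 = 0 := rfl
        have h1 : ((WithLp.equiv 2 (Fin 2 → ℝ)).symm ![0, 1/(k+1:ℝ)] : EuclideanSpace ℝ (Fin 2)) 0 = 0 := rfl
        have h2 : ((WithLp.equiv 2 (Fin 2 → ℝ)).symm ![0, 1/(k+1:ℝ)] : EuclideanSpace ℝ (Fin 2)) 1 = 1/(k+1:ℝ) := rfl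
        rw [h1, h2]
        have : (0 : EuclideanSpace ℝ (Fin 2)) 1 = 0 := rfl
        rw [this]
        simp [Real.dist_eq]
        rw [Real.sqrt_sq_eq_abs]
        rw [abs_of_nonneg (by positivity)]
      simp only [hdd]
      exact tendsto_one_div_add_atTop_nhds_zero_nat
    · intro k
      set t : ℝ := 1/(k+1:ℝ) with ht
      have ht0 : 0 < t := by positivity
      have ht1 : t ≤ 1 := by
        rw [ht, div_le_one (by positivity)]
        have : (0:ℝ) ≤ k := Nat.cast_nonneg k
        linarith
      set xk : EuclideanSpace ℝ (Fin 2) := (WithLp.equiv 2 (Fin 2 → ℝ)).symm ![0, t] with hxk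
      have hxk1 : xk 1 = t := rfl
      have hxk0 : xk 0 = 0 := rfl
      constructor
      · intro h
        have h' : xk = 0 := h
        have ht' : t = (0 : EuclideanSpace ℝ (Fin 2)) 1 := by rw [← h']; exact hxk1.symm
        have ht'' : t = 0 := ht'.trans rfl
        linarith
      · -- upper bound on dist to Z
        have hup : infDist (emb xk) Z ≤ t ^ 2 := by
          set zc : EuclideanSpace ℂ (Fin 2) :=
            (WithLp.equiv 2 (Fin 2 → ℂ)).symm ![Complex.I * (t:ℂ) ^ 2, (t:ℂ)] with hzc
          have hzc0 : zc 0 = Complex.I * (t:ℂ) ^ 2 := rfl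
          have hzc1 : zc 1 = (t:ℂ) := rfl
          have hzcZ : zc ∈ Z := by
            rw [hZ]
            simp only [Set.mem_setOf_eq, hzc0, hzc1]
            ring_nf
            rw [Complex.I_sq]
            ring
          have hdist : dist (emb xk) zc = t ^ 2 := by
            rw [EuclideanSpace.dist_eq, Fin.sum_univ_two, hemb xk 0, hemb xk 1,
              hxk0, hxk1, hzc0, hzc1]
            rw [Complex.dist_eq, Complex.dist_eq]
            simp only [Complex.ofReal_zero, zero_sub, sub_self]
            rw [norm_neg]
            have : ‖Complex.I * (t:ℂ) ^ 2‖ = t ^ 2 := by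
              rw [norm_mul, Complex.norm_I, norm_pow, Complex.norm_real, Real.norm_eq_abs,
                abs_of_nonneg (le_of_lt ht0)]
              ring
            rw [this]
            simp
            rw [Real.sqrt_sq_eq_abs, abs_of_nonneg (by positivity)]
          calc infDist (emb xk) Z ≤ dist (emb xk) zc := infDist_le_dist_of_mem hzcZ
            _ = t ^ 2 := hdist
        -- lower bound on dist to Y
        have hlow : t ^ μ / 4 ≤ infDist xk Y := by
          refine le_infDist' hYne ?_
          intro y hy
          rw [hY] at hy
          have hy' : |y 0| = |y 1| ^ μ := hy
          have hc0 : |y 0| ≤ dist xk y := by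
            have := coord_dist_le xk y 0
            rw [hxk0] at this
            simpa [Real.dist_eq, abs_sub_comm] using this
          have hc1 : |t - y 1| ≤ dist xk y := by
            have := coord_dist_le xk y 1
            rw [hxk1] at this
            simpa [Real.dist_eq] using this
          have htμ : t ^ μ ≤ t := by
            calc t ^ μ ≤ t ^ (1:ℝ) := Real.rpow_le_rpow_of_exponent_ge ht0 ht1 hμ1
              _ = t := Real.rpow_one t
          by_cases hcase : t/2 ≤ |t - y 1|
          · calc t ^ μ / 4 ≤ t / 2 := by linarith
              _ ≤ |t - y 1| := hcase
              _ ≤ dist xk y := hc1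
          · push_neg at hcase
            have hy1 : t/2 ≤ |y 1| := by
              have := abs_sub_abs_le_abs_sub t (y 1)
              rw [abs_of_nonneg (le_of_lt ht0)] at this
              linarith
            have : (t/2) ^ μ ≤ |y 1| ^ μ :=
              Real.rpow_le_rpow (by positivity) hy1 (le_of_lt hμ0)
            have hsplit : (t/2 : ℝ) ^ μ = t ^ μ / 2 ^ μ :=
              Real.div_rpow (le_of_lt ht0) (by norm_num) μ
            have h2μ : (2:ℝ) ^ μ ≤ 4 := by
              calc (2:ℝ) ^ μ ≤ 2 ^ (2:ℝ) :=
                    Real.rpow_le_rpow_of_exponent_le (by norm_num) hμ2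
                _ = 4 := by
                    rw [show (2:ℝ) = ((2:ℕ):ℝ) by norm_num, Real.rpow_natCast]; norm_num
            have h2μ0' : (0:ℝ) < 2 ^ μ := Real.rpow_pos_of_pos (by norm_num) μ
            have htμ4 : t ^ μ / 4 ≤ t ^ μ / 2 ^ μ := by
              apply div_le_div_of_nonneg_left (Real.rpow_nonneg (le_of_lt ht0) μ) h2μ0' h2μ
            calc t ^ μ / 4 ≤ t ^ μ / 2 ^ μ := htμ4
              _ = (t/2) ^ μ := hsplit.symm
              _ ≤ |y 1| ^ μ := this
              _ = |y 0| := hy'.symm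
              _ ≤ dist xk y := hc0
        -- combine
        have htμpos : 0 < t ^ μ / 4 := by positivity
        have hinfpos : 0 < infDist xk Y := lt_of_lt_of_le htμpos hlow
        have hfinal : t ^ 2 ≤ 16 * infDist xk Y ^ (2/μ) := by
          have h1 : (t ^ μ / 4) ^ (2/μ) ≤ infDist xk Y ^ (2/μ) :=
            Real.rpow_le_rpow (le_of_lt htμpos) hlow (le_of_lt h2μ0)
          have h2 : (t ^ μ / 4) ^ (2/μ) = t ^ 2 / 4 ^ (2/μ) := by
            rw [Real.div_rpow (Real.rpow_nonneg (le_of_lt ht0) μ) (by norm_num)]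
            congr 1
            rw [← Real.rpow_mul (le_of_lt ht0)]
            rw [show μ * (2/μ) = 2 by field_simp]
            rw [show (2:ℝ) = ((2:ℕ):ℝ) by norm_num, Real.rpow_natCast]
          have h4 : (4:ℝ) ^ (2/μ) ≤ 16 := by
            calc (4:ℝ) ^ (2/μ) ≤ 4 ^ (2:ℝ) :=
                  Real.rpow_le_rpow_of_exponent_le (by norm_num) h2μ2
              _ = 16 := by
                  rw [show (2:ℝ) = ((2:ℕ):ℝ) by norm_num, Real.rpow_natCast]; norm_num
          have h40 : (0:ℝ) < 4 ^ (2/μ) := Real.rpow_pos_of_pos (by norm_num) _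
          have : t ^ 2 / 16 ≤ t ^ 2 / 4 ^ (2/μ) :=
            div_le_div_of_nonneg_left (by positivity) h40 h4
          rw [h2] at h1
          nlinarith [Real.rpow_nonneg (le_of_lt hinfpos) (2/μ)]
        linarith
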